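/- arXiv:1908.04132 — 8 statements merged into one kernel-verified Lean document; each statement's English description precedes it below -/
import Mathlib

section
/- Let 𝒜 be an abelian category. Let S = (l_S : D ⟶ A, r_S : D ⟶ B) be a span, and let T = (l_T : E ⟶ B, r_T : E ⟶ C) and T' = (l_{T'} : E' ⟶ B, r_{T'} : E' ⟶ C) be spans that are stably equivalent. Then the composite spans S·T and S·T' (formed via pullbacks of r_S against l_T and l_{T'} respectively) are stably equivalent. Likewise, if S and S' are stably equivalent spans from A to B, then S·T and S'·T are stably equivalent. Hence stable equivalence is a congruence for span composition in an abelian category. -/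
open CategoryTheory CategoryTheory.Limits

/-- Precomposition with an epimorphism does not change the image subobject. -/
lemma imageSubobject_epi_comp' {𝒜 : Type*} [Category 𝒜] [Abelian 𝒜]
    {X' X Y : 𝒜} (h : X' ⟶ X) [Epi h] (f : X ⟶ Y) :
    imageSubobject (h ≫ f) = imageSubobject f := by
  refine le_antisymm (imageSubobject_comp_le h f) ?_
  haveI : StrongEpi h := strongEpi_of_epi h
  have sq : CommSq (factorThruImageSubobject (h ≫ f)) h
      (imageSubobject (h ≫ f)).arrow f := ⟨by simp [imageSubobject_arrow_comp]⟩
  exact imageSubobject_le f sq.lift sq.fac_right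

/-- Replacing the second span by its epi-quotient target does not change
the image subobject of the composite span. -/
lemma key_epi_lemma {𝒜 : Type*} [Category 𝒜] [Abelian 𝒜]
    {A B C D I E : 𝒜} (lS : D ⟶ A) (rS : D ⟶ B) (μ : I ⟶ B) (ν : I ⟶ C)
    (k : E ⟶ I) [Epi k] :
    imageSubobject (biprod.lift (pullback.fst rS (k ≫ μ) ≫ lS)
        (pullback.snd rS (k ≫ μ) ≫ (k ≫ ν))) =
      imageSubobject (biprod.lift (pullback.fst rS μ ≫ lS) (pullback.snd rS μ ≫ ν)) := by
  let φ : pullback rS (k ≫ μ) ⟶ pullback rS μ :=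
    (pullbackLeftPullbackSndIso rS μ k).inv ≫ pullback.fst (pullback.snd rS μ) k
  haveI : Epi φ := epi_comp _ _
  have hfst : φ ≫ pullback.fst rS μ = pullback.fst rS (k ≫ μ) := by
    simp [φ]
  have hsnd : φ ≫ pullback.snd rS μ = pullback.snd rS (k ≫ μ) ≫ k := by
    simp [φ]
  have hfac : biprod.lift (pullback.fst rS (k ≫ μ) ≫ lS)
      (pullback.snd rS (k ≫ μ) ≫ (k ≫ ν)) =
      φ ≫ biprod.lift (pullback.fst rS μ ≫ lS) (pullback.snd rS μ ≫ ν) := by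
    apply biprod.hom_ext
    · simp [reassoc_of% hfst]
    · simp [reassoc_of% hsnd]
  rw [hfac, imageSubobject_epi_comp' φ]

/-- Replacing the first span by its epi-quotient target does not change
the image subobject of the composite span. -/
lemma key_epi_lemma' {𝒜 : Type*} [Category 𝒜] [Abelian 𝒜]
    {A B C I E E' : 𝒜} (μ : I ⟶ A) (ν : I ⟶ B) (lT : E ⟶ B) (rT : E ⟶ C)
    (k : E' ⟶ I) [Epi k] :
    imageSubobject (biprod.lift (pullback.fst (k ≫ ν) lT ≫ (k ≫ μ))
        (pullback.snd (k ≫ ν) lT ≫ rT)) =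
      imageSubobject (biprod.lift (pullback.fst ν lT ≫ μ) (pullback.snd ν lT ≫ rT)) := by
  let φ : pullback (k ≫ ν) lT ⟶ pullback ν lT :=
    (pullbackRightPullbackFstIso ν lT k).inv ≫ pullback.snd k (pullback.fst ν lT)
  haveI : Epi φ := epi_comp _ _
  have hfst : φ ≫ pullback.fst ν lT = pullback.fst (k ≫ ν) lT ≫ k := by
    simp [φ]
  have hsnd : φ ≫ pullback.snd ν lT = pullback.snd (k ≫ ν) lT := by
    simp [φ]
  have hfac : biprod.lift (pullback.fst (k ≫ ν) lT ≫ (k ≫ μ))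
      (pullback.snd (k ≫ ν) lT ≫ rT) =
      φ ≫ biprod.lift (pullback.fst ν lT ≫ μ) (pullback.snd ν lT ≫ rT) := by
    apply biprod.hom_ext
    · simp [reassoc_of% hfst]
    · simp [reassoc_of% hsnd]
  rw [hfac, imageSubobject_epi_comp' φ]

/-- Stable equivalence is a congruence for span composition in an abelian category:
replacing either factor of a composite `S·T` by a stably equivalent span yields a stably
equivalent composite. -/
theorem stable_equivalence_congruence {𝒜 : Type*} [Category 𝒜] [Abelian 𝒜]
    {A B C D D' E E' : 𝒜}
    (lS : D ⟶ A) (rS : D ⟶ B) (lS' : D' ⟶ A) (rS' : D' ⟶ B)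
    (lT : E ⟶ B) (rT : E ⟶ C) (lT' : E' ⟶ B) (rT' : E' ⟶ C) :
    (imageSubobject (biprod.lift lT rT) = imageSubobject (biprod.lift lT' rT') →
      imageSubobject (biprod.lift (pullback.fst rS lT ≫ lS) (pullback.snd rS lT ≫ rT)) =
        imageSubobject (biprod.lift (pullback.fst rS lT' ≫ lS) (pullback.snd rS lT' ≫ rT'))) ∧
    (imageSubobject (biprod.lift lS rS) = imageSubobject (biprod.lift lS' rS') →
      imageSubobject (biprod.lift (pullback.fst rS lT ≫ lS) (pullback.snd rS lT ≫ rT)) =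
        imageSubobject (biprod.lift (pullback.fst rS' lT ≫ lS') (pullback.snd rS' lT ≫ rT))) := by
  constructor
  · intro h
    set N := imageSubobject (biprod.lift lT rT) with hN
    let μ : (N : 𝒜) ⟶ B := N.arrow ≫ biprod.fst
    let ν : (N : 𝒜) ⟶ C := N.arrow ≫ biprod.snd
    let k : E ⟶ (N : 𝒜) := factorThruImageSubobject (biprod.lift lT rT)
    let k' : E' ⟶ (N : 𝒜) :=
      factorThruImageSubobject (biprod.lift lT' rT') ≫
        (Subobject.isoOfEq _ _ h.symm).hom
    haveI : Epi k' := epi_comp _ _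
    have hk1 : lT = k ≫ μ := by
      simp [k, μ, N, reassoc_of% (imageSubobject_arrow_comp (biprod.lift lT rT))]
    have hk2 : rT = k ≫ ν := by
      simp [k, ν, N, reassoc_of% (imageSubobject_arrow_comp (biprod.lift lT rT))]
    have harr : (Subobject.isoOfEq _ _ h.symm).hom ≫ N.arrow =
        (imageSubobject (biprod.lift lT' rT')).arrow := by
      simp [Subobject.isoOfEq, hN]
    have hk1' : lT' = k' ≫ μ := by
      have := imageSubobject_arrow_comp (biprod.lift lT' rT')
      simp only [k', μ, Category.assoc, reassoc_of% harr]
      rw [reassoc_of% this]; simp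
    have hk2' : rT' = k' ≫ ν := by
      have := imageSubobject_arrow_comp (biprod.lift lT' rT')
      simp only [k', ν, Category.assoc, reassoc_of% harr]
      rw [reassoc_of% this]; simp
    rw [hk1, hk2, hk1', hk2', key_epi_lemma lS rS μ ν k, key_epi_lemma lS rS μ ν k']
  · intro h
    set N := imageSubobject (biprod.lift lS rS) with hN
    let μ : (N : 𝒜) ⟶ A := N.arrow ≫ biprod.fst
    let ν : (N : 𝒜) ⟶ B := N.arrow ≫ biprod.snd
    let k : D ⟶ (N : 𝒜) := factorThruImageSubobject (biprod.lift lS rS)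
    let k' : D' ⟶ (N : 𝒜) :=
      factorThruImageSubobject (biprod.lift lS' rS') ≫
        (Subobject.isoOfEq _ _ h.symm).hom
    haveI : Epi k' := epi_comp _ _
    have hk1 : lS = k ≫ μ := by
      simp [k, μ, N, reassoc_of% (imageSubobject_arrow_comp (biprod.lift lS rS))]
    have hk2 : rS = k ≫ ν := by
      simp [k, ν, N, reassoc_of% (imageSubobject_arrow_comp (biprod.lift lS rS))]
    have harr : (Subobject.isoOfEq _ _ h.symm).hom ≫ N.arrow =
        (imageSubobject (biprod.lift lS' rS')).arrow := by
      simp [Subobject.isoOfEq, hN]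
    have hk1' : lS' = k' ≫ μ := by
      have := imageSubobject_arrow_comp (biprod.lift lS' rS')
      simp only [k', μ, Category.assoc, reassoc_of% harr]
      rw [reassoc_of% this]; simp
    have hk2' : rS' = k' ≫ ν := by
      have := imageSubobject_arrow_comp (biprod.lift lS' rS')
      simp only [k', ν, Category.assoc, reassoc_of% harr]
      rw [reassoc_of% this]; simp
    rw [hk1, hk2, hk1', hk2', key_epi_lemma' μ ν lT rT k, key_epi_lemma' μ ν lT rT k']
end

section
/- Let 𝒜 be an abelian category and let α, α' : A ⟶ B be morphisms. If the image of biprod.lift (𝟙_A) α : A ⟶ A ⊞ B equals the image of biprod.lift (𝟙_A) α' : A ⟶ A ⊞ B as subobjects of A ⊞ B, then α = α'. In other words, the functor sending a morphism to its graph span, from 𝒜 to the category of generalized morphisms, is faithful. -/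
open CategoryTheory CategoryTheory.Limits

/-- The functor sending a morphism to its graph span is faithful: if the associated relations
of the graphs of `α` and `α'` agree as subobjects of `A ⊞ B`, then `α = α'`. -/
theorem graph_faithful {𝒜 : Type*} [Category 𝒜] [Abelian 𝒜]
    {A B : 𝒜} (α α' : A ⟶ B)
    (h : imageSubobject (biprod.lift (𝟙 A) α) = imageSubobject (biprod.lift (𝟙 A) α')) :
    α = α' := by
  have m1 : Mono (biprod.lift (𝟙 A) α) :=
    mono_of_mono_fac (biprod.lift_fst (𝟙 A) α)
  have m2 : Mono (biprod.lift (𝟙 A) α') :=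
    mono_of_mono_fac (biprod.lift_fst (𝟙 A) α')
  rw [imageSubobject_mono, imageSubobject_mono] at h
  have le := h.le
  have w := Subobject.ofMkLEMk_comp le
  set i := Subobject.ofMkLEMk _ _ le with hi
  have hfst : i ≫ biprod.lift (𝟙 A) α' ≫ biprod.fst = biprod.lift (𝟙 A) α ≫ biprod.fst := by
    rw [← Category.assoc, w]
  simp only [biprod.lift_fst, Category.comp_id] at hfst
  have hsnd : i ≫ biprod.lift (𝟙 A) α' ≫ biprod.snd = biprod.lift (𝟙 A) α ≫ biprod.snd := by
    rw [← Category.assoc, w]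
  simp only [biprod.lift_snd, hfst, Category.id_comp] at hsnd
  exact hsnd.symm
end

section
/- Let 𝒜 be an abelian category and ε : A ⟶ B an epimorphism. Then the span (ε, ε) from B to B — which is the composite [ε]⁻¹·[ε] of the pseudo-inverse of the graph of ε with the graph of ε — is stably equivalent to the identity span on B: the image of biprod.lift ε ε : A ⟶ B ⊞ B equals the image of biprod.lift (𝟙_B) (𝟙_B) : B ⟶ B ⊞ B as subobjects of B ⊞ B. Hence in the generalized morphism category, [ε]⁻¹ is a section of [ε]. -/
open CategoryTheory CategoryTheory.Limits

/-- If `ε : A ⟶ B` is an epimorphism, then the composite `[ε]⁻¹·[ε]`, which is the span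
`(ε, ε)` from `B` to `B`, is stably equivalent to the identity span on `B`. Hence `[ε]⁻¹`
is a section of `[ε]` in the generalized morphism category. -/
theorem epi_graph_split {𝒜 : Type*} [Category 𝒜] [Abelian 𝒜]
    {A B : 𝒜} (ε : A ⟶ B) [Epi ε] :
    imageSubobject (biprod.lift ε ε) = imageSubobject (biprod.lift (𝟙 B) (𝟙 B)) := by
  have hcomp : biprod.lift ε ε = ε ≫ biprod.lift (𝟙 B) (𝟙 B) := by ext <;> simp
  rw [hcomp]
  have hle := imageSubobject_comp_le ε (biprod.lift (𝟙 B) (𝟙 B))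
  have : IsIso (Subobject.ofLE _ _ hle) :=
    isIso_of_mono_of_epi _
  refine le_antisymm hle (Subobject.le_of_comm (inv (Subobject.ofLE _ _ hle)) ?_)
  rw [IsIso.inv_comp_eq, Subobject.ofLE_arrow]
end

section
/- Let 𝒜 be an abelian category and let α : B ⟶ A and γ : B ⟶ C be morphisms. Let Q be the pushout of α and γ with injections inl : A ⟶ Q and inr : C ⟶ Q, and let P be the pullback of inl and inr with projections fst : P ⟶ A and snd : P ⟶ C. Then the pairing biprod.lift fst snd : P ⟶ A ⊞ C is a monomorphism, and the subobject of A ⊞ C it determines equals the image of biprod.lift α γ : B ⟶ A ⊞ C. In terms of generalized morphisms this is the pushout computation rule [α]⁻¹ ≫ [γ] = [γ_*] ≫ [α_*]⁻¹. -/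
open CategoryTheory CategoryTheory.Limits

/-- Pushout computation rule `[α]⁻¹ ≫ [γ] = [γ_*] ≫ [α_*]⁻¹`: for morphisms `α : B ⟶ A` and
`γ : B ⟶ C`, the pairing of the projections of the pullback of the pushout injections is a
monomorphism, and the subobject of `A ⊞ C` it determines is the image of
`biprod.lift α γ`. -/
theorem pushout_computation_rule {𝒜 : Type*} [Category 𝒜] [Abelian 𝒜]
    {A B C : 𝒜} (α : B ⟶ A) (γ : B ⟶ C) :
    Mono (biprod.lift (pullback.fst (pushout.inl α γ) (pushout.inr α γ))
        (pullback.snd (pushout.inl α γ) (pushout.inr α γ))) ∧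
    imageSubobject (biprod.lift (pullback.fst (pushout.inl α γ) (pushout.inr α γ))
        (pullback.snd (pushout.inl α γ) (pushout.inr α γ))) =
      imageSubobject (biprod.lift α γ) := by
  -- notation
  set i := pushout.inl α γ with hi
  set j := pushout.inr α γ with hj
  set k : pullback i j ⟶ A ⊞ C := biprod.lift (pullback.fst i j) (pullback.snd i j) with hkdef
  -- the sign-flip isomorphism on the biproduct
  let e : (A ⊞ C) ≅ (A ⊞ C) := biprod.mapIso (Iso.refl A) (-Iso.refl C)
  -- the mediating morphism
  set q : A ⊞ C ⟶ pushout α γ := biprod.desc i (-j) with hq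
  have he : e.hom ≫ biprod.desc i j = q := by
    apply biprod.hom_ext' <;> simp [e, hq]
  -- `k` is a kernel of `q`
  have hkq : k ≫ q = 0 := by
    rw [hq, hkdef, biprod.lift_desc, Preadditive.comp_neg, pullback.condition, add_neg_cancel]
  have hker : IsLimit (KernelFork.ofι k hkq) := by
    have h := Abelian.PullbackToBiproductIsKernel.isLimitPullbackToBiproduct i j
    exact h
  have hmono : Mono k := mono_of_isLimit_fork hker
  refine ⟨hmono, ?_⟩
  -- `q` is a cokernel of `biprod.lift α γ`
  have hw : biprod.lift α γ ≫ q = 0 := by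
    rw [hq, biprod.lift_desc, Preadditive.comp_neg, pushout.condition, add_neg_cancel]
  have hcoker : IsColimit (CokernelCofork.ofπ q hw) := by
    have h := CokernelCofork.isColimitOfIsColimitOfIff
      (Abelian.BiproductToPushoutIsCokernel.isColimitBiproductToPushout α γ)
      (biprod.lift α γ) e (by
        intro W φ
        have : biprod.lift α (-γ) = biprod.lift α γ ≫ e.hom := by
          apply biprod.hom_ext <;> simp [e]
        rw [this, Category.assoc])
    exact IsColimit.ofIsoColimit h (Cofork.ext (Iso.refl _) (by simpa using he))
  -- exactness of the two short complexes with middle map `q`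
  have h1 : imageSubobject k = kernelSubobject q :=
    (ShortComplex.exact_iff_image_eq_kernel (ShortComplex.mk k q hkq)).mp
      (ShortComplex.exact_of_f_is_kernel _ hker)
  have h2 : imageSubobject (biprod.lift α γ) = kernelSubobject q :=
    (ShortComplex.exact_iff_image_eq_kernel (ShortComplex.mk (biprod.lift α γ) q hw)).mp
      (ShortComplex.exact_of_g_is_cokernel _ hcoker)
  rw [← hkdef] at *
  exact h1.trans h2.symm
end

section
/- Generalized homomorphism theorem: Let 𝒜 be an abelian category and let λ : C ⟶ A and ρ : C ⟶ B be morphisms. Let D = image(λ) (the domain), K = image(kernel.ι ρ ≫ λ) (the generalized kernel, a subobject of A contained in D), I = image(ρ) (the generalized image), and F = image(kernel.ι λ ≫ ρ) (the defect, a subobject of B contained in I). Then there is an isomorphism ∂̃ : D/K ≅ I/F between the quotient objects (the cokernels of the inclusions K ↪ D and F ↪ I) such that the composite of the canonical factorization C ↠ D of λ through its image with the projection D ↠ D/K and with ∂̃ equals the composite of the canonical factorization C ↠ I of ρ with the projection I ↠ I/F. -/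
open CategoryTheory CategoryTheory.Limits

lemma ghm_aux {𝒜 : Type*} [Category 𝒜] [Abelian 𝒜]
    {A B C X : 𝒜} (l : C ⟶ A) (r : C ⟶ B) (g : C ⟶ X)
    (h1 : kernel.ι l ≫ g = 0) (h2 : kernel.ι r ≫ g = 0) :
    ∃ h : cokernel (image.preComp (kernel.ι r) l) ⟶ X,
      factorThruImage l ≫ cokernel.π (image.preComp (kernel.ι r) l) ≫ h = g := by
  have hk : kernel.ι (factorThruImage l) ≫ g = 0 := by
    have hl : kernel.ι (factorThruImage l) ≫ l = 0 := by
      rw [show kernel.ι (factorThruImage l) ≫ l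
          = (kernel.ι (factorThruImage l) ≫ factorThruImage l) ≫ image.ι l from by
            rw [Category.assoc, image.fac], kernel.condition, zero_comp]
    rw [← kernel.lift_ι l _ hl, Category.assoc, h1, comp_zero]
  have hg1 : factorThruImage l ≫ Abelian.epiDesc (factorThruImage l) g hk = g :=
    Abelian.comp_epiDesc _ g hk
  have hz : image.preComp (kernel.ι r) l ≫ Abelian.epiDesc (factorThruImage l) g hk = 0 := by
    rw [← cancel_epi (factorThruImage (kernel.ι r ≫ l)), ← Category.assoc,
      image.factorThruImage_preComp, Category.assoc, hg1, h2, comp_zero]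
  refine ⟨cokernel.desc _ _ hz, ?_⟩
  rw [cokernel.π_desc, hg1]

/-- Generalized homomorphism theorem: for a span `(l : C ⟶ A, ρ : C ⟶ B)` in an abelian
category, the quotient of the domain `image l` by the generalized kernel
`image (kernel.ι r ≫ l)` is isomorphic to the quotient of the generalized image `image r`
by the defect `image (kernel.ι l ≫ r)`, compatibly with the canonical factorizations of
`l` and `r` through their images and the quotient projections. -/
theorem generalized_homomorphism_theorem {𝒜 : Type*} [Category 𝒜] [Abelian 𝒜]
    {A B C : 𝒜} (l : C ⟶ A) (r : C ⟶ B) :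
    ∃ e : cokernel (image.preComp (kernel.ι r) l) ≅ cokernel (image.preComp (kernel.ι l) r),
      factorThruImage l ≫ cokernel.π (image.preComp (kernel.ι r) l) ≫ e.hom =
        factorThruImage r ≫ cokernel.π (image.preComp (kernel.ι l) r) := by
  set f₁ := factorThruImage l ≫ cokernel.π (image.preComp (kernel.ι r) l) with hf₁
  set f₂ := factorThruImage r ≫ cokernel.π (image.preComp (kernel.ι l) r) with hf₂
  have e1l : kernel.ι l ≫ f₁ = 0 := by
    have h : kernel.ι l ≫ factorThruImage l = 0 := by
      rw [← cancel_mono (image.ι l), Category.assoc, image.fac, kernel.condition, zero_comp]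
    rw [hf₁, ← Category.assoc, h, zero_comp]
  have e1r : kernel.ι r ≫ f₁ = 0 := by
    rw [hf₁, ← Category.assoc, ← image.factorThruImage_preComp, Category.assoc,
      cokernel.condition, comp_zero]
  have e2r : kernel.ι r ≫ f₂ = 0 := by
    have h : kernel.ι r ≫ factorThruImage r = 0 := by
      rw [← cancel_mono (image.ι r), Category.assoc, image.fac, kernel.condition, zero_comp]
    rw [hf₂, ← Category.assoc, h, zero_comp]
  have e2l : kernel.ι l ≫ f₂ = 0 := by
    rw [hf₂, ← Category.assoc, ← image.factorThruImage_preComp, Category.assoc,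
      cokernel.condition, comp_zero]
  obtain ⟨h₁, hh₁⟩ := ghm_aux l r f₂ e2l e2r
  obtain ⟨h₂, hh₂⟩ := ghm_aux r l f₁ e1r e1l
  have epi₁ : Epi f₁ := by rw [hf₁]; exact epi_comp _ _
  have epi₂ : Epi f₂ := by rw [hf₂]; exact epi_comp _ _
  have c₁ : f₁ ≫ h₁ = f₂ := by rw [hf₁, Category.assoc]; exact hh₁
  have c₂ : f₂ ≫ h₂ = f₁ := by rw [hf₂, Category.assoc]; exact hh₂
  refine ⟨⟨h₁, h₂, ?_, ?_⟩, hh₁⟩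
  · rw [← cancel_epi f₁, ← Category.assoc, c₁, c₂, Category.comp_id]
  · rw [← cancel_epi f₂, ← Category.assoc, c₂, c₁, Category.comp_id]
end

section
/- Snake lemma connecting morphism via pullback and pushout: Let 𝒜 be an abelian category with morphisms f : A ⟶ B, g : B ⟶ C, f' : A' ⟶ B', g' : B' ⟶ C', and vertical morphisms α : A ⟶ A', β : B ⟶ B', γ : C ⟶ C' satisfying f ≫ β = α ≫ f' and g ≫ γ = β ≫ g'. Assume the top row is exact at B and at C (i.e., f ≫ g = 0, image f = kernel g, and g is an epimorphism) and the bottom row is exact at A' and at B' (i.e., f' ≫ g' = 0, image f' = kernel g', and f' is a monomorphism). Let P be the pullback of g : B ⟶ C along the kernel embedding kernel.ι γ : ker γ ⟶ C, with projections p₁ : P ⟶ ker γ and p₂ : P ⟶ B, and let Q be the pushout of cokernel.π α : A' ⟶ coker α and f' : A' ⟶ B', with injections j₁ : coker α ⟶ Q and j₂ : B' ⟶ Q. Then there exists a unique morphism δ : ker γ ⟶ coker α such that p₁ ≫ δ ≫ j₁ = p₂ ≫ β ≫ j₂. -/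
open CategoryTheory CategoryTheory.Limits

/-- Snake lemma connecting morphism via pullback and pushout: given a snake diagram with
the top row exact at `B` and `C` (with `g` epi) and the bottom row exact at `A'` and `B'`
(with `f'` mono), there is a unique morphism `δ : ker γ ⟶ coker α` such that
`p₁ ≫ δ ≫ j₁ = p₂ ≫ β ≫ j₂`, where `P` is the pullback of `g` and `kernel.ι γ` and `Q` is
the pushout of `cokernel.π α` and `f'`. -/
theorem snake_connecting_morphism {𝒜 : Type*} [Category 𝒜] [Abelian 𝒜]
    {A B C A' B' C' : 𝒜}
    (f : A ⟶ B) (g : B ⟶ C) (f' : A' ⟶ B') (g' : B' ⟶ C')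
    (α : A ⟶ A') (β : B ⟶ B') (γ : C ⟶ C')
    (h₁ : f ≫ β = α ≫ f') (h₂ : g ≫ γ = β ≫ g')
    (hw : f ≫ g = 0) (hex : imageSubobject f = kernelSubobject g) [Epi g]
    (hw' : f' ≫ g' = 0) (hex' : imageSubobject f' = kernelSubobject g') [Mono f'] :
    ∃! δ : kernel γ ⟶ cokernel α,
      pullback.snd g (kernel.ι γ) ≫ δ ≫ pushout.inl (cokernel.π α) f' =
        pullback.fst g (kernel.ι γ) ≫ β ≫ pushout.inr (cokernel.π α) f' := by
  set S : ShortComplex 𝒜 := ShortComplex.mk f g hw with hS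
  set S' : ShortComplex 𝒜 := ShortComplex.mk f' g' hw' with hS'
  have hSe : S.Exact := S.exact_iff_image_eq_kernel.2 hex
  have hS'e : S'.Exact := S'.exact_iff_image_eq_kernel.2 hex'
  have : Mono S'.f := by simpa using ‹Mono f'›
  set p₁ : pullback g (kernel.ι γ) ⟶ kernel γ := pullback.snd g (kernel.ι γ)
  set p₂ : pullback g (kernel.ι γ) ⟶ B := pullback.fst g (kernel.ι γ)
  -- `p₂ ≫ β` composes to zero with `g'`
  have hz : (p₂ ≫ β) ≫ S'.g = 0 := by
    show (p₂ ≫ β) ≫ g' = 0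
    rw [Category.assoc, ← h₂, ← Category.assoc, pullback.condition, Category.assoc,
      kernel.condition, comp_zero]
  -- lift it through `f'`
  set ψ : pullback g (kernel.ι γ) ⟶ A' := hS'e.lift (p₂ ≫ β) hz with hψdef
  have hψ : ψ ≫ f' = p₂ ≫ β := hS'e.lift_f (p₂ ≫ β) hz
  -- `kernel.ι p₁ ≫ ψ ≫ cokernel.π α = 0`
  have hker : kernel.ι p₁ ≫ ψ ≫ cokernel.π α = 0 := by
    have hm : (kernel.ι p₁ ≫ p₂) ≫ S.g = 0 := by
      show (kernel.ι p₁ ≫ p₂) ≫ g = 0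
      rw [Category.assoc, pullback.condition, ← Category.assoc, kernel.condition, zero_comp]
    obtain ⟨A'', e, he, u, hu⟩ := hSe.exact_up_to_refinements (kernel.ι p₁ ≫ p₂) hm
    have hu' : e ≫ kernel.ι p₁ ≫ p₂ = u ≫ f := hu
    rw [← cancel_epi e, comp_zero, ← Category.assoc, ← Category.assoc]
    have key : (e ≫ kernel.ι p₁) ≫ ψ = u ≫ α := by
      rw [← cancel_mono f', Category.assoc, hψ]
      simp only [Category.assoc]
      rw [← h₁, ← Category.assoc u f β, ← hu']
      simp only [Category.assoc]
    rw [key, Category.assoc, cokernel.condition, comp_zero]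
  -- descend along the epimorphism `p₁`
  refine ⟨Abelian.epiDesc p₁ (ψ ≫ cokernel.π α) hker, ?_, ?_⟩
  · dsimp only
    rw [← Category.assoc, Abelian.comp_epiDesc, Category.assoc, pushout.condition,
      ← Category.assoc ψ f', hψ]
    simp only [Category.assoc]
  · intro δ' hδ'
    rw [← cancel_mono (pushout.inl (cokernel.π α) f'), ← cancel_epi p₁, hδ',
      ← Category.assoc p₁, Abelian.comp_epiDesc, Category.assoc, pushout.condition,
      ← Category.assoc ψ f', hψ]
    simp only [Category.assoc]
end

section
/- Induced morphism on cohomology as a generalized morphism: Let 𝒜 be an abelian category with morphisms d_A : A ⟶ B, d_B : B ⟶ C satisfying d_A ≫ d_B = 0, morphisms d_{A'} : A' ⟶ B', d_{B'} : B' ⟶ C' satisfying d_{A'} ≫ d_{B'} = 0, and morphisms α : A ⟶ A', β : B ⟶ B', γ : C ⟶ C' with d_A ≫ β = α ≫ d_{A'} and d_B ≫ γ = β ≫ d_{B'}. Let ι_B : ker d_B ⟶ B and ι_{B'} : ker d_{B'} ⟶ B' be the kernel embeddings, let ε_B : ker d_B ⟶ H and ε_{B'} : ker d_{B'} ⟶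 H' be the canonical epimorphisms onto the cohomology objects H = ker d_B / im d_A and H' = ker d_{B'} / im d_{A'}, and let δ : H ⟶ H' be the induced morphism on cohomology. Form P, the pullback of ι_B ≫ β : ker d_B ⟶ B' along ι_{B'} : ker d_{B'} ⟶ B', with projections q₁ : P ⟶ ker d_B and q₂ : P ⟶ ker d_{B'}. Then the image of biprod.lift (q₁ ≫ ε_B) (q₂ ≫ ε_{B'}) : P ⟶ H ⊞ H' equals the image of biprod.lift (𝟙_H) δ : H ⟶ H ⊞ H' as subobjects of H ⊞ H'; i.e., [δ] = [ε_B]⁻¹ ≫ [ι_B] ≫ [β] ≫ [ι_{B'}]⁻¹ ≫ [ε_{B'}] as generalized morphisms. -/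
open CategoryTheory CategoryTheory.Limits

/-- The induced morphism on cohomology as a generalized morphism:
`[δ] = [ε_B]⁻¹ ≫ [ι_B] ≫ [β] ≫ [ι_{B'}]⁻¹ ≫ [ε_{B'}]`, where the cohomology objects are
presented as cokernels of the factorizations of the differentials through the kernels, and
the middle composite is represented by the span on the pullback of `ι_B ≫ β` along
`ι_{B'}`. -/
theorem cohomology_generalized_morphism_formula {𝒜 : Type*} [Category 𝒜] [Abelian 𝒜]
    {A B C A' B' C' : 𝒜}
    (dA : A ⟶ B) (dB : B ⟶ C) (wA : dA ≫ dB = 0)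
    (dA' : A' ⟶ B') (dB' : B' ⟶ C') (wA' : dA' ≫ dB' = 0)
    (α : A ⟶ A') (β : B ⟶ B') (γ : C ⟶ C')
    (h₁ : dA ≫ β = α ≫ dA') (h₂ : dB ≫ γ = β ≫ dB')
    (δ : cokernel (kernel.lift dB dA wA) ⟶ cokernel (kernel.lift dB' dA' wA'))
    (hδ : cokernel.π (kernel.lift dB dA wA) ≫ δ =
      kernel.lift dB' (kernel.ι dB ≫ β)
          (by rw [Category.assoc, ← h₂, ← Category.assoc, kernel.condition, zero_comp]) ≫
        cokernel.π (kernel.lift dB' dA' wA')) :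
    imageSubobject
        (biprod.lift
          (pullback.fst (kernel.ι dB ≫ β) (kernel.ι dB') ≫ cokernel.π (kernel.lift dB dA wA))
          (pullback.snd (kernel.ι dB ≫ β) (kernel.ι dB') ≫
            cokernel.π (kernel.lift dB' dA' wA'))) =
      imageSubobject (biprod.lift (𝟙 (cokernel (kernel.lift dB dA wA))) δ) := by
  set k : kernel dB ⟶ kernel dB' := kernel.lift dB' (kernel.ι dB ≫ β)
      (by rw [Category.assoc, ← h₂, ← Category.assoc, kernel.condition, zero_comp]) with hkdef
  have hk : pullback.fst (kernel.ι dB ≫ β) (kernel.ι dB') ≫ k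
      = pullback.snd (kernel.ι dB ≫ β) (kernel.ι dB') := by
    rw [← cancel_mono (kernel.ι dB')]
    simp [hkdef, pullback.condition]
  have key : biprod.lift
        (pullback.fst (kernel.ι dB ≫ β) (kernel.ι dB') ≫ cokernel.π (kernel.lift dB dA wA))
        (pullback.snd (kernel.ι dB ≫ β) (kernel.ι dB') ≫ cokernel.π (kernel.lift dB' dA' wA'))
      = (pullback.fst (kernel.ι dB ≫ β) (kernel.ι dB') ≫ cokernel.π (kernel.lift dB dA wA)) ≫
        biprod.lift (𝟙 _) δ := by
    ext
    · simp
    · simp [← hk, hδ]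
  have : IsSplitEpi (pullback.fst (kernel.ι dB ≫ β) (kernel.ι dB')) :=
    ⟨⟨⟨pullback.lift (𝟙 _) k (by simp [hkdef]), by exact pullback.lift_fst _ _ _⟩⟩⟩
  rw [key]
  exact imageSubobject_epi_comp' _ _
end

section
/- Hom groups between cokernels via subquotients: Let 𝒜 be an abelian category, let ρ_A : R_A ⟶ A be a morphism with both A and R_A projective objects, and let ρ_B : R_B ⟶ B be any morphism. Consider the abelian group homomorphisms given by postcomposition with ρ_B, namely u : Hom(A, R_B) ⟶ Hom(A, B) and v : Hom(R_A, R_B) ⟶ Hom(R_A, B), and the homomorphism w : Hom(A, B)/im(u) ⟶ Hom(R_A, B)/im(v) induced by precomposition with ρ_A. Then the abelian group Hom(coker ρ_A, coker ρ_B) is isomorphic to ker(w). Under this isomorphism, the class of α : A ⟶ B with ρ_A ≫ α ∈ im(v) corresponds to the unique morphism coker ρ_A ⟶ coker ρ_B induced by α on cokernels. -/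
open CategoryTheory CategoryTheory.Limits

variable {𝒜 : Type u} [Category.{v} 𝒜] [Abelian 𝒜]

/-- Postcomposition with a morphism, as a homomorphism of Hom groups. -/
def postcompHom {X Y Z : 𝒜} (g : Y ⟶ Z) : (X ⟶ Y) →+ (X ⟶ Z) :=
  AddMonoidHom.mk' (fun f => f ≫ g) fun _ _ => CategoryTheory.Preadditive.add_comp _ _ _ _ _ _

/-- Precomposition with a morphism, as a homomorphism of Hom groups. -/
def precompHom {X Y Z : 𝒜} (f : X ⟶ Y) : (Y ⟶ Z) →+ (X ⟶ Z) :=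
  AddMonoidHom.mk' (fun g => f ≫ g) fun _ _ => CategoryTheory.Preadditive.comp_add _ _ _ _ _ _

/-- The homomorphism `w : Hom(A, B)/im(u) ⟶ Hom(R_A, B)/im(v)` induced by precomposition
with `ρ_A`, where `u` and `v` are postcomposition with `ρ_B`. -/
def wMap {A RA B RB : 𝒜} (ρA : RA ⟶ A) (ρB : RB ⟶ B) :
    ((A ⟶ B) ⧸ (postcompHom (X := A) ρB).range) →+
      ((RA ⟶ B) ⧸ (postcompHom (X := RA) ρB).range) :=
  QuotientAddGroup.map _ _ (precompHom ρA) (by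
    rintro x ⟨t, rfl⟩
    exact ⟨ρA ≫ t, by simp [postcompHom, precompHom]⟩)


lemma exists_factor {P B RB : 𝒜} [Projective P] (ρB : RB ⟶ B) (f : P ⟶ B)
    (hf : f ≫ cokernel.π ρB = 0) : ∃ t : P ⟶ RB, t ≫ ρB = f := by
  refine ⟨Projective.factorThru (kernel.lift (cokernel.π ρB) f hf)
      (Abelian.factorThruImage ρB), ?_⟩
  calc Projective.factorThru (kernel.lift (cokernel.π ρB) f hf) (Abelian.factorThruImage ρB) ≫ ρB
      = Projective.factorThru (kernel.lift (cokernel.π ρB) f hf) (Abelian.factorThruImage ρB) ≫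
        (Abelian.factorThruImage ρB ≫ Abelian.image.ι ρB) := by rw [Abelian.image.fac]
    _ = kernel.lift (cokernel.π ρB) f hf ≫ Abelian.image.ι ρB := by
        rw [← Category.assoc, Projective.factorThru_comp]
    _ = f := kernel.lift_ι _ _ _

/-- Hom groups between cokernels as subquotients: if `A` and `R_A` are projective, then
`Hom(coker ρ_A, coker ρ_B) ≅ ker w`, and under this isomorphism a morphism `φ` on cokernels
induced by `α : A ⟶ B` corresponds to the class of `α`. -/
theorem hom_between_cokernels_iso_ker {A RA B RB : 𝒜} (ρA : RA ⟶ A) (ρB : RB ⟶ B)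
    [Projective A] [Projective RA] :
    ∃ e : (cokernel ρA ⟶ cokernel ρB) ≃+ (wMap ρA ρB).ker,
      ∀ (α : A ⟶ B), ρA ≫ α ∈ (postcompHom (X := RA) ρB).range →
        ∀ φ : cokernel ρA ⟶ cokernel ρB,
          cokernel.π ρA ≫ φ = α ≫ cokernel.π ρB →
            (e φ).1 = (QuotientAddGroup.mk α :
              (A ⟶ B) ⧸ (postcompHom (X := A) ρB).range) := by

  have key : ∀ φ : cokernel ρA ⟶ cokernel ρB,
      ∃ α : A ⟶ B, α ≫ cokernel.π ρB = cokernel.π ρA ≫ φ :=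
    fun φ => ⟨Projective.factorThru (cokernel.π ρA ≫ φ) (cokernel.π ρB),
      Projective.factorThru_comp _ _⟩
  choose lft hlft using key
  have eqcls : ∀ α α' : A ⟶ B, α ≫ cokernel.π ρB = α' ≫ cokernel.π ρB →
      (QuotientAddGroup.mk α : (A ⟶ B) ⧸ (postcompHom (X := A) ρB).range) =
        QuotientAddGroup.mk α' := by
    intro α α' h
    rw [QuotientAddGroup.eq]
    obtain ⟨t, ht⟩ := exists_factor ρB (-α + α')
      (by simp [Preadditive.add_comp, Preadditive.neg_comp, h])
    exact ⟨t, by simpa [postcompHom] using ht⟩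
  have hker : ∀ φ : cokernel ρA ⟶ cokernel ρB,
      (QuotientAddGroup.mk (lft φ) : (A ⟶ B) ⧸ (postcompHom (X := A) ρB).range) ∈
        (wMap ρA ρB).ker := by
    intro φ
    have h0 : (ρA ≫ lft φ) ≫ cokernel.π ρB = 0 := by
      rw [Category.assoc, hlft, ← Category.assoc, cokernel.condition, zero_comp]
    obtain ⟨t, ht⟩ := exists_factor ρB (ρA ≫ lft φ) h0
    show wMap ρA ρB (QuotientAddGroup.mk (lft φ)) = 0
    have : wMap ρA ρB (QuotientAddGroup.mk (lft φ)) = QuotientAddGroup.mk (ρA ≫ lft φ) := rfl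
    rw [this, QuotientAddGroup.eq_zero_iff]
    exact ⟨t, by simpa [postcompHom] using ht⟩
  let F : (cokernel ρA ⟶ cokernel ρB) →+ (wMap ρA ρB).ker :=
    AddMonoidHom.mk' (fun φ => ⟨QuotientAddGroup.mk (lft φ), hker φ⟩) (by
      intro φ ψ
      ext
      show (QuotientAddGroup.mk (lft (φ + ψ)) : (A ⟶ B) ⧸ (postcompHom (X := A) ρB).range) =
        QuotientAddGroup.mk (lft φ) + QuotientAddGroup.mk (lft ψ)
      rw [← QuotientAddGroup.mk_add]
      apply eqcls
      rw [hlft, Preadditive.add_comp, hlft, hlft, Preadditive.comp_add])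
  have hinj : Function.Injective F := by
    rw [injective_iff_map_eq_zero]
    intro φ hφ
    have h1 : (QuotientAddGroup.mk (lft φ) : (A ⟶ B) ⧸ (postcompHom (X := A) ρB).range) = 0 :=
      congrArg Subtype.val hφ
    rw [QuotientAddGroup.eq_zero_iff] at h1
    obtain ⟨t, ht⟩ := h1
    have : cokernel.π ρA ≫ φ = 0 := by
      rw [← hlft]
      have ht' : t ≫ ρB = lft φ := ht
      rw [← ht', Category.assoc, cokernel.condition, comp_zero]
    exact (cancel_epi (cokernel.π ρA)).1 (by rw [this, comp_zero])
  have hsurj : Function.Surjective F := by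
    rintro ⟨q, hq⟩
    obtain ⟨α, rfl⟩ := QuotientAddGroup.mk_surjective q
    have hq' : (QuotientAddGroup.mk (ρA ≫ α) :
        (RA ⟶ B) ⧸ (postcompHom (X := RA) ρB).range) = 0 := hq
    rw [QuotientAddGroup.eq_zero_iff] at hq'
    obtain ⟨t, ht⟩ := hq'
    have ht' : t ≫ ρB = ρA ≫ α := ht
    have hcond : ρA ≫ (α ≫ cokernel.π ρB) = 0 := by
      rw [← Category.assoc, ← ht', Category.assoc, cokernel.condition, comp_zero]
    refine ⟨cokernel.desc ρA (α ≫ cokernel.π ρB) hcond, Subtype.ext ?_⟩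
    show (QuotientAddGroup.mk (lft _) : (A ⟶ B) ⧸ (postcompHom (X := A) ρB).range) =
      QuotientAddGroup.mk α
    apply eqcls
    rw [hlft, cokernel.π_desc]
  refine ⟨AddEquiv.ofBijective F ⟨hinj, hsurj⟩, ?_⟩
  intro α hα φ hφ
  show (QuotientAddGroup.mk (lft φ) : (A ⟶ B) ⧸ (postcompHom (X := A) ρB).range) =
    QuotientAddGroup.mk α
  apply eqcls
  rw [hlft, hφ]
end
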